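/- The set B is linearly independent over ℂ (hence it is a minimal generating set of the S-submodule span_S(B) of F), and its cardinality is m = n(n⁴ − 5n³ + 7n² − n − 2)/12. -/

import Mathlib

/-- Index set for the variables `x_{ij}` (`1 ≤ j < i ≤ n`, `0`-indexed). -/
abbrev PIdx (n : ℕ) := { p : Fin n × Fin n // p.2 < p.1 }

/-- The polynomial ring `S = ℂ[x_{ij} : j < i]`. -/
abbrev Sn (n : ℕ) := MvPolynomial (PIdx n) ℂ

/-- Index set for the basis `r_{ijk}` (`k < j < i`). -/
abbrev TIdx (n : ℕ) := { t : Fin n × Fin n × Fin n // t.2.2 < t.2.1 ∧ t.2.1 < t.1 }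

/-- The free `S`-module `F` with basis `{r_{ijk} : k < j < i}`. -/
abbrev Fn (n : ℕ) := TIdx n → Sn n

/-- The variable `x_{ij}` (for `j < i`). -/
noncomputable def Xv (n : ℕ) (i j : Fin n) (h : j < i) : Sn n := MvPolynomial.X ⟨(i, j), h⟩

/-- The basis element `r_{ijk}` of `F` (for `k < j < i`). -/
noncomputable def rGen (n : ℕ) (i j k : Fin n) (h1 : k < j) (h2 : j < i) : Fn n :=
  Pi.single ⟨(i, j, k), h1, h2⟩ 1

/-- The generating set `B = ∪ B_{ijk}` of relations (`g₁,…,g₄, h₁,…,h₈` of the paper):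
for each `k < j < i` and admissible `l₁ < k < l₂ < j < l₃ < i < l₄` and pairs `t < s`
with `{s,t} ∩ {i,j,k} = ∅`. -/
noncomputable def BSet (n : ℕ) : Set (Fn n) :=
  { w | ∃ (i j k : Fin n) (hkj : k < j) (hji : j < i),
    -- g₁
    (∃ (l : Fin n) (h1 : k < l) (h2 : l < j),
      w = (-Xv n j k hkj - Xv n l k h1) • rGen n i j l h2 hji
          + Xv n j l h2 • rGen n i j k hkj hji) ∨
    -- g₂
    (∃ (l : Fin n) (_h1 : k < l) (h2 : l < j),
      w = Xv n j k hkj • rGen n i j l h2 hji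
          + Xv n i l (h2.trans hji) • rGen n i j k hkj hji) ∨
    -- g₃
    (∃ (l : Fin n) (h1 : j < l) (h2 : l < i),
      w = -(Xv n j k hkj • rGen n i l j h1 h2)
          + Xv n i l h2 • rGen n i j k hkj hji) ∨
    -- g₄
    (∃ (l : Fin n) (h1 : i < l),
      w = Xv n j k hkj • rGen n l i j hji h1
          + Xv n l i h1 • rGen n i j k hkj hji) ∨
    -- h₁
    (∃ (l : Fin n) (h1 : l < k),
      w = (Xv n i l (h1.trans (hkj.trans hji)) + Xv n j l (h1.trans hkj) + Xv n k l h1) •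
          rGen n i j k hkj hji) ∨
    -- h₂
    (w = (Xv n i k (hkj.trans hji) + Xv n j k hkj) • rGen n i j k hkj hji) ∨
    -- h₃
    (∃ (l : Fin n) (h1 : k < l) (_h2 : l < j), w = Xv n l k h1 • rGen n i j k hkj hji) ∨
    -- h₄
    (∃ (l : Fin n) (h1 : j < l) (_h2 : l < i),
      w = Xv n l k (hkj.trans h1) • rGen n i j k hkj hji) ∨
    -- h₅
    (∃ (l : Fin n) (h1 : j < l) (_h2 : l < i), w = Xv n l j h1 • rGen n i j k hkj hji) ∨
    -- h₆
    (∃ (l : Fin n) (h1 : i < l),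
      w = Xv n l k ((hkj.trans hji).trans h1) • rGen n i j k hkj hji) ∨
    -- h₇
    (∃ (l : Fin n) (h1 : i < l), w = Xv n l j (hji.trans h1) • rGen n i j k hkj hji) ∨
    -- h₈
    (∃ (s t : Fin n) (h : t < s), s ≠ i ∧ s ≠ j ∧ s ≠ k ∧ t ≠ i ∧ t ≠ j ∧ t ≠ k ∧
      w = Xv n s t h • rGen n i j k hkj hji) }

/-- The `S`-submodule of `F` spanned by `B`. -/
noncomputable def spanB (n : ℕ) : Submodule (Sn n) (Fn n) := Submodule.span (Sn n) (BSet n)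

/-- The infinitesimal Alexander invariant `𝔅ₙ = F / span_S(B)` of `PΣₙ⁺`. -/
abbrev Bn (n : ℕ) := Fn n ⧸ spanB n

/-!
Each element of `B` has exactly one term `x_{ab} r_{ijk}` whose index is a *pivot*: a tuple with
`k < j < i` and `b < a`, other than `x_{ij}`, the `x_{jb}` with `b ≤ k` and the `x_{kb}`. Its
coefficient is `1`, and conversely every pivot is the pivot of exactly one element of `B`. Hence
the `ℂ`-linear forms "coefficient of `x_{ab} r_{ijk}`" at the pivots are dual to `B`, which is
therefore linearly independent and equinumerous with the pivots. For fixed `k < j < i` (counted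
from `0`) there are `n(n-1)/2 - 2k - 2` pivots, and summing over the triples gives the formula.
-/

open Finset in
theorem Finset.sum_range_ite_lt {M : Type*} [AddCommMonoid M] (f : ℕ → M) {m N : ℕ} (h : m ≤ N) :
    ∑ j ∈ range N, (if j < m then f j else 0) = ∑ j ∈ range m, f j := by
  rw [← sum_filter]
  congr 1
  ext j
  simp only [mem_filter, mem_range]
  omega

namespace BSet

open MvPolynomial

variable {n : ℕ}

/- `Xv` and `rGen` extended by zero outside `b < a`, resp. `k < j < i`, so that elements of `B`
can be written without order proofs. -/
noncomputable def xvar (n : ℕ) (a b : Fin n) : Sn n :=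
  if h : b < a then X (⟨(a, b), h⟩ : PIdx n) else 0

noncomputable def rvec (n : ℕ) (i j k : Fin n) : Fn n :=
  if h : k < j ∧ j < i then Pi.single (⟨(i, j, k), h⟩ : TIdx n) 1 else 0

lemma Xv_eq_xvar {a b : Fin n} (h : b < a) : Xv n a b h = xvar n a b := (dif_pos h).symm

lemma rGen_eq_rvec {i j k : Fin n} (h₁ : k < j) (h₂ : j < i) :
    rGen n i j k h₁ h₂ = rvec n i j k := by
  rw [rvec, dif_pos ⟨h₁, h₂⟩, rGen]

lemma coeff_xvar (p : PIdx n) (a b : Fin n) :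
    coeff (Finsupp.single p 1) (xvar n a b) = if p.1 = (a, b) then 1 else 0 := by
  unfold xvar
  split_ifs with hba hp hp
  · simp [coeff_X, Finsupp.single_left_inj, Subtype.ext_iff, hp]
  · simp [coeff_X, Finsupp.single_left_inj, Subtype.ext_iff, Ne.symm hp]
  · exact absurd (by simpa [hp] using p.2) hba
  · rfl

lemma smul_rvec_apply (c : Sn n) (i j k : Fin n) (t : TIdx n) :
    (c • rvec n i j k) t = if t.1 = (i, j, k) then c else 0 := by
  unfold rvec
  split_ifs with hijk ht ht
  · obtain rfl : t = ⟨(i, j, k), hijk⟩ := Subtype.ext ht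
    simp
  · simp [Subtype.ext_iff, ht]
  · exact absurd (by simpa [ht] using t.2) hijk
  · simp

noncomputable def coord (p : PIdx n) (t : TIdx n) : Fn n →ₗ[ℂ] ℂ :=
  (lcoeff ℂ (Finsupp.single p 1)).comp (LinearMap.proj t)

lemma coord_xvar_smul_rvec (p : PIdx n) (t : TIdx n) (a b i j k : Fin n) :
    coord p t (xvar n a b • rvec n i j k) = if p.1 = (a, b) ∧ t.1 = (i, j, k) then 1 else 0 := by
  simp only [coord, LinearMap.coe_comp, Function.comp_apply, LinearMap.coe_proj,
    Function.eval, lcoeff_apply, smul_rvec_apply]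
  split_ifs <;> simp_all [coeff_xvar]

lemma xvar_smul_rvec_mem_BSet {i j k a b : Fin n} (hkj : k < j) (hji : j < i) (hba : b < a)
    (hai : a ≠ i) (haj : a ≠ j) (hak : a ≠ k) (hbi : b ≠ i) :
    xvar n a b • rvec n i j k ∈ BSet n := by
  refine ⟨i, j, k, hkj, hji, ?_⟩
  simp only [Xv_eq_xvar, rGen_eq_rvec]
  by_cases hbj : b = j
  · subst hbj
    rcases lt_or_gt_of_ne hai with hai | hai
    · iterate 8 right
      exact Or.inl ⟨a, hba, hai, rfl⟩
    · iterate 10 right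
      exact Or.inl ⟨a, hai, rfl⟩
  by_cases hbk : b = k
  · subst hbk
    rcases lt_or_gt_of_ne haj with haj | haj
    · iterate 6 right
      exact Or.inl ⟨a, hba, haj, rfl⟩
    rcases lt_or_gt_of_ne hai with hai | hai
    · iterate 7 right
      exact Or.inl ⟨a, haj, hai, rfl⟩
    · iterate 9 right
      exact Or.inl ⟨a, hai, rfl⟩
  iterate 11 right
  exact ⟨a, b, hba, hai, haj, hak, hbi, hbj, hbk, rfl⟩

/-- `x_{ab} r_{ijk}` is the pivot of an element of `B` (indices counted from `0`). -/
def IsPivot (i j k a b : ℕ) : Prop :=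
  k < j ∧ j < i ∧ b < a ∧ ¬(a = i ∧ b = j) ∧ ¬(a = j ∧ b ≤ k) ∧ a ≠ k

instance (i j k a b : ℕ) : Decidable (IsPivot i j k a b) := by
  unfold IsPivot; infer_instance

abbrev Pivot (n : ℕ) :=
  {x : Fin n × Fin n × Fin n × Fin n × Fin n // IsPivot x.1 x.2.1 x.2.2.1 x.2.2.2.1 x.2.2.2.2}

/-- The element of `B` with pivot `x_{ab} r_{ijk}`; by branch: `h₁`, `h₂`, `g₂`, `g₃`, `g₁`, `g₄`,
and `h₃`–`h₈`. -/
noncomputable def relOfPivot (n : ℕ) (i j k a b : Fin n) : Fn n :=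
  if a = i then
    if b < k then (xvar n i b + xvar n j b + xvar n k b) • rvec n i j k
    else if b = k then (xvar n i k + xvar n j k) • rvec n i j k
    else if b < j then xvar n j k • rvec n i j b + xvar n i b • rvec n i j k
    else -(xvar n j k • rvec n i b j) + xvar n i b • rvec n i j k
  else if a = j then (-xvar n j k - xvar n b k) • rvec n i j b + xvar n j b • rvec n i j k
  else if b = i then xvar n j k • rvec n a i j + xvar n a i • rvec n i j k
  else xvar n a b • rvec n i j k

namespace Pivot

noncomputable def rel (q : Pivot n) : Fn n :=
  relOfPivot n q.1.1 q.1.2.1 q.1.2.2.1 q.1.2.2.2.1 q.1.2.2.2.2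

noncomputable def coord (q : Pivot n) : Fn n →ₗ[ℂ] ℂ :=
  BSet.coord ⟨(q.1.2.2.2.1, q.1.2.2.2.2), q.2.2.2.1⟩ ⟨(q.1.1, q.1.2.1, q.1.2.2.1), q.2.1, q.2.2.1⟩

lemma coord_rel (q q' : Pivot n) : q.coord q'.rel = if q = q' then 1 else 0 := by
  obtain ⟨⟨i, j, k, a, b⟩, hq⟩ := q
  obtain ⟨⟨i', j', k', a', b'⟩, hq'⟩ := q'
  simp only [Subtype.mk.injEq, Prod.mk.injEq]
  dsimp only [IsPivot] at hq hq'
  simp only [coord, rel, relOfPivot]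
  split_ifs <;>
    simp only [add_smul, sub_smul, neg_smul, map_add, map_sub, map_neg, coord_xvar_smul_rvec,
      Prod.mk.injEq] <;>
    split_ifs <;> first | omega | norm_num

lemma rel_mem_BSet (q : Pivot n) : q.rel ∈ BSet n := by
  obtain ⟨⟨i, j, k, a, b⟩, hq⟩ := q
  dsimp only [IsPivot] at hq
  obtain ⟨hkj, hji, hba, hab_ne_ij, hab_ne_jb, hak⟩ := hq
  simp only [rel, relOfPivot]
  split_ifs with hai hbk hbk' hbj haj hbi
  rotate_left 6
  · exact xvar_smul_rvec_mem_BSet hkj hji hba hai haj (by omega) hbi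
  all_goals refine ⟨i, j, k, hkj, hji, ?_⟩; simp only [Xv_eq_xvar, rGen_eq_rvec]
  · iterate 4 right
    exact Or.inl ⟨b, hbk, rfl⟩
  · iterate 5 right
    exact Or.inl trivial
  · exact Or.inr (Or.inl ⟨b, by omega, hbj, rfl⟩)
  · iterate 2 right
    exact Or.inl ⟨b, by omega, by omega, rfl⟩
  · exact Or.inl ⟨b, by omega, by omega, rfl⟩
  · subst hbi
    iterate 3 right
    exact Or.inl ⟨a, by omega, rfl⟩

lemma exists_rel_eq_of_mem_BSet {w : Fn n} (hw : w ∈ BSet n) : ∃ q : Pivot n, q.rel = w := by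
  obtain ⟨i, j, k, hkj, hji, hw⟩ := hw
  have mk : ∀ {w : Fn n} (a b : Fin n)
      (_ : IsPivot i j k a b := by dsimp only [IsPivot]; omega)
      (_ : relOfPivot n i j k a b = w := by
        simp only [relOfPivot]; split_ifs <;> first | rfl | omega),
      ∃ q : Pivot n, q.rel = w :=
    fun a b hq hw ↦ ⟨⟨(i, j, k, a, b), hq⟩, hw⟩
  simp only [Xv_eq_xvar, rGen_eq_rvec] at hw
  rcases hw with ⟨l, _, _, rfl⟩ | ⟨l, _, _, rfl⟩ | ⟨l, _, _, rfl⟩ | ⟨l, _, rfl⟩ |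
    ⟨l, _, rfl⟩ | rfl | ⟨l, _, _, rfl⟩ | ⟨l, _, _, rfl⟩ | ⟨l, _, _, rfl⟩ | ⟨l, _, rfl⟩ |
    ⟨l, _, rfl⟩ | ⟨s, t, _, _, _, _, _, _, _, rfl⟩
  -- the pivots of `g₁`, `g₂`, `g₃`, `g₄`, `h₁`, …, `h₈`
  exacts [mk j l, mk i l, mk i l, mk l i, mk i l, mk i k, mk l k, mk l k, mk l j, mk l k, mk l j,
    mk s t]

lemma range_rel : Set.range (rel : Pivot n → Fn n) = BSet n :=
  (Set.range_subset_iff.mpr rel_mem_BSet).antisymm fun _ hw ↦ exists_rel_eq_of_mem_BSet hw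

lemma linearIndependent_rel : LinearIndependent ℂ (rel : Pivot n → Fn n) := by
  have hdual : (LinearMap.pi fun q : Pivot n ↦ q.coord) ∘ rel = fun q ↦ Pi.single q 1 := by
    ext q' q
    simp [coord_rel, Pi.single_apply, eq_comm]
  exact .of_comp _ (hdual ▸ Pi.linearIndependent_single_one (Pivot n) ℂ)

end Pivot

open Finset

lemma sum_isPivot {N i j k : ℕ} (hkj : k < j) (hji : j < i) (hi : i < N) :
    ∑ a ∈ range N, ∑ b ∈ range N, (if IsPivot i j k a b then 1 else 0 : ℤ) =
      ∑ a ∈ range N, (a : ℤ) - 2 * k - 2 := by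
  have hsplit : ∀ a b, (if IsPivot i j k a b then 1 else 0 : ℤ) =
      (if b < a then 1 else 0) - (if a = i then if b = j then 1 else 0 else 0)
        - (if a = j then if b < k + 1 then 1 else 0 else 0)
        - (if a = k then if b < k then 1 else 0 else 0) := by
    intro a b
    unfold IsPivot
    split_ifs <;> omega
  have hcount : ∀ m, m ≤ N → ∑ b ∈ range N, (if b < m then 1 else 0 : ℤ) = m := fun m hm ↦ by
    simpa using sum_range_ite_lt (fun _ ↦ (1 : ℤ)) hm
  simp only [hsplit, sum_sub_distrib, sum_ite_irrel, sum_const_zero, sum_ite_eq', mem_range]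
  have hjN : j < N := hji.trans hi
  have hkN : k < N := hkj.trans hjN
  rw [sum_congr rfl fun a ha ↦ hcount a (mem_range.1 ha).le, hcount (k + 1) hkN, hcount k hkN.le]
  simp only [hi, hjN, hkN, if_true]
  push_cast
  ring

lemma card_pivot_eq_sum (n : ℕ) :
    (Nat.card (Pivot n) : ℤ) = ∑ i ∈ range n, ∑ j ∈ range n, ∑ k ∈ range n, ∑ a ∈ range n,
      ∑ b ∈ range n, (if IsPivot i j k a b then 1 else 0 : ℤ) := by
  rw [Nat.card_eq_fintype_card, Fintype.card_subtype, card_filter]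
  push_cast
  simp only [Fintype.sum_prod_type, ← Fin.sum_univ_eq_sum_range]

lemma sum_isPivot_eq_sum_triples (N : ℕ) :
    ∑ i ∈ range N, ∑ j ∈ range N, ∑ k ∈ range N, ∑ a ∈ range N, ∑ b ∈ range N,
      (if IsPivot i j k a b then 1 else 0 : ℤ) =
    ∑ i ∈ range N, ∑ j ∈ range i, ∑ k ∈ range j, (∑ a ∈ range N, (a : ℤ) - 2 * k - 2) := by
  refine sum_congr rfl fun i hi ↦ ?_
  have hi := mem_range.1 hi
  rw [← sum_range_ite_lt _ hi.le]
  refine sum_congr rfl fun j _ ↦ ?_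
  split_ifs with hji
  · rw [← sum_range_ite_lt _ (hji.trans hi).le]
    refine sum_congr rfl fun k _ ↦ ?_
    split_ifs with hkj
    · exact sum_isPivot hkj hji hi
    · exact sum_eq_zero fun a _ ↦ sum_eq_zero fun b _ ↦ if_neg fun h ↦ hkj h.1
  · exact sum_eq_zero fun k _ ↦ sum_eq_zero fun a _ ↦ sum_eq_zero fun b _ ↦
      if_neg fun h ↦ hji h.2.1

lemma twelve_mul_sum_triples (c : ℤ) (m : ℕ) :
    12 * ∑ i ∈ range m, ∑ j ∈ range i, ∑ k ∈ range j, (c - 2 * k - 2) =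
      (m - 2) * (m - 1) * m * (2 * c - m - 1) := by
  have h₁ (j : ℕ) : ∑ k ∈ range j, (c - 2 * k - 2) = j * (c - j - 1) := by
    induction j with
    | zero => simp
    | succ j ih => rw [sum_range_succ, ih]; push_cast; ring
  have h₂ (i : ℕ) : 6 * ∑ j ∈ range i, ∑ k ∈ range j, (c - 2 * k - 2) =
      (i - 1) * i * (3 * c - 2 * i - 2) := by
    induction i with
    | zero => simp
    | succ i ih => rw [sum_range_succ, mul_add, ih, h₁]; push_cast; ring
  induction m with
  | zero => simp
  | succ m ih => rw [sum_range_succ, mul_add, ih]; push_cast; linear_combination 2 * h₂ m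

lemma twelve_mul_card_pivot (n : ℕ) :
    12 * (Nat.card (Pivot n) : ℤ) = n * (n ^ 4 - 5 * n ^ 3 + 7 * n ^ 2 - n - 2) := by
  have hgauss : 2 * ∑ a ∈ range n, (a : ℤ) = n * (n - 1) := by
    induction n with
    | zero => simp
    | succ n ih => rw [sum_range_succ, mul_add, ih]; push_cast; ring
  rw [card_pivot_eq_sum, sum_isPivot_eq_sum_triples, twelve_mul_sum_triples]
  linear_combination ((n : ℤ) - 2) * (n - 1) * n * hgauss

end BSet

theorem BSet_linearIndependent_card_general (n : ℕ) :
    LinearIndependent ℂ ((↑) : BSet n → Fn n) ∧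
    (12 : ℤ) * (Nat.card (BSet n) : ℤ) =
      (n : ℤ) * ((n : ℤ) ^ 4 - 5 * (n : ℤ) ^ 3 + 7 * (n : ℤ) ^ 2 - (n : ℤ) - 2) := by
  have hli := BSet.Pivot.linearIndependent_rel (n := n)
  refine ⟨hli.linearIndepOn_id' BSet.Pivot.range_rel, ?_⟩
  rw [← BSet.Pivot.range_rel, Nat.card_range_of_injective hli.injective]
  exact BSet.twelve_mul_card_pivot n

/-- The set `B` is linearly independent over `ℂ` (hence a minimal generating set of
`span_S(B)`), and its cardinality `m` satisfies `12 m = n(n⁴ − 5n³ + 7n² − n − 2)`. -/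
theorem BSet_linearIndependent_card (n : ℕ) (hn : 3 ≤ n) :
    LinearIndependent ℂ ((↑) : BSet n → Fn n) ∧
    (12 : ℤ) * (Nat.card (BSet n) : ℤ) =
      (n : ℤ) * ((n : ℤ) ^ 4 - 5 * (n : ℤ) ^ 3 + 7 * (n : ℤ) ^ 2 - (n : ℤ) - 2) :=
  BSet_linearIndependent_card_general n
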